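/- Let G be a finite group, Γ ⊆ G a union of nontrivial conjugacy classes, G_Γ = F/R_Γ as in the tautological central extension. Then there is a short exact sequence 1 → (R_Γ ∩ [F,F])/[F,R] → H_2(G,ℤ) → H_{2,Γ}(G) → 1; in particular H_{2,Γ}(G) is an abelian group. -/

import Mathlib

variable (G : Type*) [Group G]

/-- The canonical surjection from the free group `F` on the set `G` to `G`. -/
def tautProj : FreeGroup G →* G := FreeGroup.lift id

/-- `R = ker (F → G)`. -/
def Rrel : Subgroup (FreeGroup G) := (tautProj G).ker

/-- The commutator subgroup `[F, R]`. -/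
def FRcomm : Subgroup (FreeGroup G) := ⁅(⊤ : Subgroup (FreeGroup G)), Rrel G⁆

/-- The tautological lifts `â b̂ ĉ⁻¹ b̂⁻¹` of the conjugation relations, `a ∈ Γ`,
`c = b⁻¹ a b`. -/
def conjRels (Γ : Set G) : Set (FreeGroup G) :=
  {x | ∃ a ∈ Γ, ∃ b : G, x = FreeGroup.of a * FreeGroup.of b *
    (FreeGroup.of (b⁻¹ * a * b))⁻¹ * (FreeGroup.of b)⁻¹}

/-- `R_Γ`: the normal subgroup generated by `[F,R]` and the lifted conjugation relations. -/
def RGamma (Γ : Set G) : Subgroup (FreeGroup G) :=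
  Subgroup.normalClosure ((FRcomm G : Set (FreeGroup G)) ∪ conjRels G Γ)

instance (Γ : Set G) : (RGamma G Γ).Normal := Subgroup.normalClosure_normal

instance : (Rrel G).Normal := MonoidHom.normal_ker _

instance (K : Subgroup (FreeGroup G)) : ((FRcomm G).subgroupOf K).Normal :=
  Subgroup.Normal.subgroupOf (Subgroup.commutator_normal ⊤ (Rrel G)) K

/-- Hopf's formula: `H₂(G,ℤ) = (R ∩ [F,F]) / [F,R]`. -/
abbrev H2 := (Rrel G ⊓ commutator (FreeGroup G) : Subgroup (FreeGroup G)) ⧸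
  (FRcomm G).subgroupOf (Rrel G ⊓ commutator (FreeGroup G))

/-- The group `(R_Γ ∩ [F,F]) / [F,R]`. -/
abbrev HKer (Γ : Set G) := (RGamma G Γ ⊓ commutator (FreeGroup G) : Subgroup (FreeGroup G)) ⧸
  (FRcomm G).subgroupOf (RGamma G Γ ⊓ commutator (FreeGroup G))

/-! Reduction modulo `R_Γ` maps `R ∩ [F,F]` into `H_{2,Γ}(G) = (R/R_Γ) ∩ [G_Γ, G_Γ]`, and
onto it because `R_Γ ≤ R`: a commutator of `F` lying in `R` modulo `R_Γ` already lies in `R`.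
The map kills `[F,R] ⊆ R_Γ` and its kernel on `R ∩ [F,F]` is `R_Γ ∩ [F,F]`, which gives the
exact sequence. Finally `[F,R] ⊆ R_Γ` makes `R/R_Γ = ker (G_Γ → G)` central in `G_Γ`, so
`H_{2,Γ}(G)` is abelian. -/

namespace Subgroup

variable {F : Type*} [Group F]

theorem map_mk'_le_center_of_commutator_le {N H : Subgroup F} [N.Normal]
    (h : ⁅(⊤ : Subgroup F), H⁆ ≤ N) : H.map (QuotientGroup.mk' N) ≤ center (F ⧸ N) := by
  rw [← commutator_top_left_eq_bot_iff_le_center,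
    ← map_top_of_surjective _ (QuotientGroup.mk'_surjective N), ← map_commutator,
    map_eq_bot_iff, QuotientGroup.ker_mk']
  exact h

theorem map_inf_of_ker_le {E : Type*} [Group E] (f : F →* E) {H : Subgroup F} (K : Subgroup F)
    (hH : f.ker ≤ H) : (H ⊓ K).map f = H.map f ⊓ K.map f := by
  refine le_antisymm (map_inf_le _ _ f) ?_
  rintro _ ⟨⟨h, hh, rfl⟩, ⟨k, hk, hkh⟩⟩
  have hk' : h⁻¹ * k ∈ f.ker := by simp [MonoidHom.mem_ker, hkh]
  exact ⟨k, ⟨by simpa using H.mul_mem hh (hH hk'), hk⟩, hkh⟩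

variable {C A B : Subgroup F} [(C.subgroupOf A).Normal] [(C.subgroupOf B).Normal]

def quotientInclusion (h : A ≤ B) : A ⧸ C.subgroupOf A →* B ⧸ C.subgroupOf B :=
  QuotientGroup.map _ _ (inclusion h) (comap_inclusion_subgroupOf h C).ge

theorem quotientInclusion_injective (h : A ≤ B) :
    Function.Injective (quotientInclusion (C := C) h) := by
  rw [← MonoidHom.ker_eq_bot_iff, quotientInclusion, QuotientGroup.ker_map, map_eq_bot_iff,
    QuotientGroup.ker_mk', comap_inclusion_subgroupOf]

theorem range_quotientInclusion {T : Type*} [Group T] (h : A ≤ B) (φ : B →* T)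
    (hC : C.subgroupOf B ≤ φ.ker) (hA : φ.ker = A.subgroupOf B) :
    (quotientInclusion (C := C) h).range = (QuotientGroup.lift _ φ hC).ker := by
  rw [QuotientGroup.ker_lift, hA, ← inclusion_range h, ← MonoidHom.range_comp,
    MonoidHom.range_eq_map, ← map_top_of_surjective _ (QuotientGroup.mk'_surjective _), map_map,
    ← MonoidHom.range_eq_map]
  rfl

noncomputable def kerLiftEquiv {T : Type*} [Group T] (h : A ≤ B) (φ : B →* T)
    (hC : C.subgroupOf B ≤ φ.ker) (hA : φ.ker = A.subgroupOf B) :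
    (QuotientGroup.lift _ φ hC).ker ≃* A ⧸ C.subgroupOf A :=
  ((MonoidHom.ofInjective (quotientInclusion_injective h)).trans
    (MulEquiv.subgroupCongr (range_quotientInclusion h φ hC hA))).symm

end Subgroup

theorem FRcomm_le_Rrel : FRcomm G ≤ Rrel G := Subgroup.commutator_le_right _ _

theorem FRcomm_le_RGamma (Γ : Set G) : FRcomm G ≤ RGamma G Γ :=
  fun _ hx => Subgroup.subset_normalClosure (Or.inl hx)

theorem RGamma_le_Rrel (Γ : Set G) : RGamma G Γ ≤ Rrel G := by
  refine Subgroup.normalClosure_le_normal ?_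
  rintro x (hx | ⟨a, -, b, rfl⟩)
  · exact FRcomm_le_Rrel G hx
  · simp [Rrel, tautProj, mul_assoc]

section

variable {G} {Γ : Set G} {α : (FreeGroup G ⧸ RGamma G Γ) →* G}

theorem comp_mk'_RGamma (hα : ∀ g : G, α (QuotientGroup.mk (FreeGroup.of g)) = g) :
    α.comp (QuotientGroup.mk' (RGamma G Γ)) = tautProj G :=
  FreeGroup.ext_hom _ _ fun g => by simpa [tautProj] using hα g

theorem ker_eq_map_Rrel (hα : ∀ g : G, α (QuotientGroup.mk (FreeGroup.of g)) = g) :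
    α.ker = (Rrel G).map (QuotientGroup.mk' (RGamma G Γ)) := by
  rw [Rrel, ← comp_mk'_RGamma hα, ← MonoidHom.comap_ker,
    Subgroup.map_comap_eq_self_of_surjective (QuotientGroup.mk'_surjective _)]

theorem ker_prod_abelianizationOf_eq_map
    (hα : ∀ g : G, α (QuotientGroup.mk (FreeGroup.of g)) = g) :
    (α.prod Abelianization.of).ker =
      (Rrel G ⊓ commutator (FreeGroup G)).map (QuotientGroup.mk' (RGamma G Γ)) := by
  have hker : (QuotientGroup.mk' (RGamma G Γ)).ker ≤ Rrel G :=
    (QuotientGroup.ker_mk' _).trans_le (RGamma_le_Rrel G Γ)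
  rw [MonoidHom.ker_prod, Abelianization.ker_of, ker_eq_map_Rrel hα,
    Subgroup.map_inf_of_ker_le _ _ hker, map_commutator_eq, QuotientGroup.range_mk',
    commutator_def]

theorem ker_prod_abelianizationOf_le_center
    (hα : ∀ g : G, α (QuotientGroup.mk (FreeGroup.of g)) = g) :
    (α.prod Abelianization.of).ker ≤ Subgroup.center (FreeGroup G ⧸ RGamma G Γ) := by
  rw [MonoidHom.ker_prod, ker_eq_map_Rrel hα]
  exact inf_le_left.trans (Subgroup.map_mk'_le_center_of_commutator_le (FRcomm_le_RGamma G Γ))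

end

theorem H2_to_H2Gamma_exact (Γ : Set G)
    (α : (FreeGroup G ⧸ RGamma G Γ) →* G)
    (hα : ∀ g : G, α (QuotientGroup.mk (FreeGroup.of g)) = g) :
    ∃ f : H2 G →* (α.prod (Abelianization.of : (FreeGroup G ⧸ RGamma G Γ) →*
        Abelianization (FreeGroup G ⧸ RGamma G Γ))).ker,
      Function.Surjective f ∧
      Nonempty (f.ker ≃* HKer G Γ) ∧
      ∀ x y : (α.prod (Abelianization.of : (FreeGroup G ⧸ RGamma G Γ) →*
        Abelianization (FreeGroup G ⧸ RGamma G Γ))).ker, x * y = y * x := by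
  set K := Rrel G ⊓ commutator (FreeGroup G)
  have hK := ker_prod_abelianizationOf_eq_map hα
  let φ : K →* (α.prod Abelianization.of).ker :=
    ((QuotientGroup.mk' (RGamma G Γ)).comp K.subtype).codRestrict _
      fun x => hK ▸ Subgroup.mem_map_of_mem _ x.2
  have hφ_surj : Function.Surjective φ := by
    rintro ⟨y, hy⟩
    rw [hK] at hy
    obtain ⟨x, hx, rfl⟩ := hy
    exact ⟨⟨x, hx⟩, rfl⟩
  have hφ_ker : φ.ker = (RGamma G Γ ⊓ commutator (FreeGroup G)).subgroupOf K := by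
    ext x
    simpa [φ, Subgroup.mem_subgroupOf] using fun _ => x.2.2
  have hFR : (FRcomm G).subgroupOf K ≤ φ.ker := fun x hx =>
    Subtype.ext ((QuotientGroup.eq_one_iff _).mpr (FRcomm_le_RGamma G Γ hx))
  refine ⟨QuotientGroup.lift _ φ hFR,
    QuotientGroup.lift_surjective_of_surjective _ φ hφ_surj hFR,
    ⟨Subgroup.kerLiftEquiv (inf_le_inf_right _ (RGamma_le_Rrel G Γ)) φ hFR hφ_ker⟩,
    fun x y => Subtype.ext ?_⟩
  exact (Subgroup.mem_center_iff.mp (ker_prod_abelianizationOf_le_center hα x.2) y).symm
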